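/- arXiv:math-ph/0606019 — 4 statements merged into one kernel-verified Lean document; each statement's English description precedes it below -/
import Mathlib

section
/- If ŵ is an invertible formal series ŵ = I + ∑_{k≥1} w_k z^{-k} (w_k matrix functions on ℤ) satisfying the dressing relation L_D·ŵ = (Λŵ)·(Δ - zA), then for each α the matrix R_α := ŵ·E_α·ŵ^{-1} satisfies [R_α, L_D]_D = 0, i.e. R_α is a resolvent of L_D. -/
/-!
Writing `ŵ⁻¹` for the inverse, the dressing relation says `L = (Λŵ)·D·ŵ⁻¹` with `D = Δ - zA`.
Conjugation by `ŵ` then carries the twisted commutation `(ΛE_α)·D = D·E_α`, which holds because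
`E_α` is constant (so `ΛE_α = E_α`) and commutes with the diagonal `D`, to
`Λ(ŵ E_α ŵ⁻¹)·L = L·(ŵ E_α ŵ⁻¹)`.
-/

theorem Matrix.commute_diagonal_of_forall_commute {n α : Type*} [Fintype n] [DecidableEq n]
    [NonUnitalNonAssocSemiring α] {d e : n → α} (h : ∀ i, Commute (d i) (e i)) :
    Commute (diagonal d) (diagonal e) := by
  simp only [Commute, SemiconjBy, diagonal_mul_diagonal, (h _).eq]

theorem Matrix.commute_single_one_diagonal {n α : Type*} [Fintype n] [DecidableEq n]
    [NonAssocSemiring α] (i : n) (d : n → α) : Commute (single i i (1 : α)) (diagonal d) := by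
  rw [← diagonal_single]
  refine commute_diagonal_of_forall_commute fun j => ?_
  rcases eq_or_ne j i with rfl | hji
  · simp
  · simp [Pi.single_eq_of_ne hji]

theorem RingHom.mapMatrix_single_one {n α β : Type*} [Fintype n] [DecidableEq n]
    [NonAssocSemiring α] [NonAssocSemiring β] (f : α →+* β) (i j : n) :
    f.mapMatrix (Matrix.single i j 1) = Matrix.single i j 1 := by
  simp [RingHom.mapMatrix_apply]

theorem RingHom.map_conj_mul_eq_mul_conj {R : Type*} [Ring R] (φ : R →+* R) (w : Rˣ)
    {D E : R} (h : φ E * D = D * E) :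
    φ (w * E * ↑w⁻¹) * (φ w * D * ↑w⁻¹) = (φ w * D * ↑w⁻¹) * (w * E * ↑w⁻¹) := by
  have hφw : φ ↑w⁻¹ * φ w = 1 := by rw [← map_mul, Units.inv_mul, map_one]
  calc φ (w * E * ↑w⁻¹) * (φ w * D * ↑w⁻¹)
      = φ w * φ E * (φ ↑w⁻¹ * φ w) * D * ↑w⁻¹ := by simp only [map_mul, mul_assoc]
    _ = φ w * (φ E * D) * ↑w⁻¹ := by simp only [hφw, mul_one, mul_assoc]
    _ = φ w * D * ↑w⁻¹ * (w * E * ↑w⁻¹) := by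
      simp only [h, mul_assoc, Units.inv_mul_cancel_left]

/-- Operators are `m×m` matrices over a ring `S` of scalar operators, `Λ₀ : S →+* S` is the
shift (acting entrywise via `mapMatrix`), the diagonal matrix `Matrix.diagonal v` plays the role of
`Δ - zA`, and `E_α = Matrix.single α α 1`. -/
theorem dressed_is_resolvent (m : ℕ) (S : Type*) [Ring S] (Λ₀ : S →+* S)
    (v : Fin m → S) (L w winv : Matrix (Fin m) (Fin m) S)
    (hw : w * winv = 1) (hw' : winv * w = 1)
    (hdress : L * w = Λ₀.mapMatrix w * Matrix.diagonal v) (α : Fin m) :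
    Λ₀.mapMatrix (w * Matrix.single α α 1 * winv) * L =
      L * (w * Matrix.single α α 1 * winv) := by
  let ŵ : (Matrix (Fin m) (Fin m) S)ˣ := ⟨w, winv, hw, hw'⟩
  have hL : L = Λ₀.mapMatrix w * Matrix.diagonal v * winv :=
    (Units.eq_mul_inv_iff_mul_eq (c := ŵ)).mpr hdress
  have htwisted : Λ₀.mapMatrix (Matrix.single α α 1) * Matrix.diagonal v =
      Matrix.diagonal v * Matrix.single α α 1 := by
    rw [Λ₀.mapMatrix_single_one]
    exact (Matrix.commute_single_one_diagonal α v).eq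
  rw [hL]
  exact Λ₀.mapMatrix.map_conj_mul_eq_mul_conj ŵ htwisted
end

section
/- If the Baker function w_D = ŵ · g(n;t,z) satisfies ∂_{kα} ŵ = -B̄_{kα} ŵ and the dressing relation, then L_D(w_D) = 0 and ∂_{kα}(w_D) = B_{kα} w_D. -/
/-!
Both equations follow by moving the dressing operator `ŵ` through the bare function `g`.
Since `ŵ⁻¹ŵ = 1`, the dressed operator `L_D` acts on `ŵ g` as `(Λŵ)` applied to `(Δ - zA) g = 0`.
For the flow, the Leibniz rule gives `∂(ŵ g) = (∂ŵ) g + ŵ z^k E g = (z^k ŵ E - B̄ ŵ) g`, and the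
splitting `B + B̄ = z^k ŵ E ŵ⁻¹`, multiplied on the right by `ŵ`, identifies `z^k ŵ E - B̄ ŵ` with `B ŵ`.
-/

theorem mul_mul_smul_smul_of_mul_eq_one {S M : Type*} [Monoid S] [MulAction S M]
    {a b c w : S} (x : M) (h : c * w = 1) : (a * b * c) • w • x = a • b • x := by
  rw [smul_smul, mul_assoc, h, mul_one, mul_smul]

theorem mul_add_mul_eq_of_add_eq_mul_conj {S : Type*} [Semiring S] {B Bb ζ w winv E : S}
    (hBB : B + Bb = ζ * (w * E * winv)) (h : winv * w = 1) : B * w + Bb * w = ζ * w * E := by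
  rw [← add_mul, hBB, mul_assoc, mul_assoc, h, mul_one, mul_assoc]

theorem map_smul_eq_sub_smul_of_leibniz {S M : Type*} [Ring S] [AddCommGroup M] [Module S M]
    {d : S →+ S} {dM : M →+ M} (hLeibM : ∀ (b : S) (x : M), dM (b • x) = d b • x + b • dM x)
    {w Bb F : S} {g : M} (hdw : d w = -(Bb * w)) (hgt : dM g = F • g) :
    dM (w • g) = (w * F - Bb * w) • g := by
  rw [hLeibM, hdw, hgt, smul_smul, sub_smul, neg_smul, neg_add_eq_sub]

theorem baker_function_equations_general (S M : Type*) [Ring S] [AddCommGroup M]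
    [Module S M] (Λ : S →+* S) (d : S →+ S) (dM : M →+ M)
    (hLeibM : ∀ (b : S) (x : M), dM (b • x) = d b • x + b • dM x)
    (w winv D E B Bb ζ : S) (g : M)
    (hw' : winv * w = 1)
    (hdw : d w = -(Bb * w))
    (hBB : B + Bb = ζ * (w * E * winv))
    (hζw : ζ * w = w * ζ)
    (hgD : D • g = 0)
    (hgt : dM g = (ζ * E) • g) :
    (Λ w * D * winv) • (w • g) = 0 ∧ dM (w • g) = B • (w • g) := by
  refine ⟨by rw [mul_mul_smul_smul_of_mul_eq_one g hw', hgD, smul_zero], ?_⟩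
  have hsplit : B * w = ζ * w * E - Bb * w :=
    eq_sub_of_add_eq (mul_add_mul_eq_of_add_eq_mul_conj hBB hw')
  calc dM (w • g) = (w * (ζ * E) - Bb * w) • g := map_smul_eq_sub_smul_of_leibniz hLeibM hdw hgt
    _ = (B * w) • g := by rw [hsplit, ← mul_assoc, hζw]
    _ = B • w • g := mul_smul B w g

/-- Baker function equations.  Operators form a ring `S` acting on a module `M` of
(matrix-valued) functions; `Λ : S →+* S` is the shift, `d : S →+ S` the time
derivative `∂_{kα}` on operators and `dM : M →+ M` the one on functions, compatible
via the Leibniz rule `dM (b • x) = d b • x + b • dM x`.  Suppose `ŵ = w` is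
invertible with inverse `winv` and satisfies the evolution `d w = -B̄·w`;
`B + B̄ = ζ·(w·E·w⁻¹)` is the splitting of `z^k R_α` (`ζ` the central scalar
`z^k`, `E = E_α`); and `g` satisfies `(Δ - zA)(g) = D • g = 0` and
`∂_{kα} g = z^k E_α g = (ζ·E) • g`.  Then the Baker function `w_D = ŵ • g`
satisfies `L_D(w_D) = 0` (with `L_D = (Λŵ)·D·ŵ⁻¹`) and `∂_{kα} w_D = B_{kα} w_D`. -/
theorem baker_function_equations (S M : Type*) [Ring S] [AddCommGroup M]
    [Module S M] (Λ : S →+* S) (d : S →+ S) (dM : M →+ M)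
    (hLeibM : ∀ (b : S) (x : M), dM (b • x) = d b • x + b • dM x)
    (w winv D E B Bb ζ : S) (g : M)
    (hw : w * winv = 1) (hw' : winv * w = 1)
    (hdw : d w = -(Bb * w))
    (hBB : B + Bb = ζ * (w * E * winv))
    (hζw : ζ * w = w * ζ)
    (hgD : D • g = 0)
    (hgt : dM g = (ζ * E) • g) :
    (Λ w * D * winv) • (w • g) = 0 ∧ dM (w • g) = B • (w • g) :=
  baker_function_equations_general S M Λ d dM hLeibM w winv D E B Bb ζ g hw' hdw hBB hζw hgD hgt
end

section
/- If the Baker function w_D satisfies L_D(w_D) = 0 and ∂_{kα} w_D = B_{kα} w_D, then the bilinear identity res_z [ z^l (Δ^m ∂^{[λ]} w_D) · w_D^{-1} ] = 0 holds for all l ≥ 0, m ∈ {0,1}, and all multi-indices [λ] of time derivatives. -/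
/-!
The set of left multiples `p * w_D` with `p ∈ P` is stable under every time derivative, by the
Leibniz rule and `∂ w_D = B w_D`, and under `Δ`, because `Λ w_D = (1 + (zA - U)) w_D`. So
`Δ^m ∂^{[λ]} w_D = q w_D` with `q ∈ P`, and multiplying by `w_D⁻¹` leaves `z^l q`, whose residue
vanishes.
-/

section LeftMultiples

variable {S : Type*} [Ring S] (P : Subring S) {w : S}

theorem exists_mem_foldr_eq_mul_of_leibniz {ι : Type*} (d : ι → S → S)
    (hLeib : ∀ i (x y : S), d i (x * y) = d i x * y + x * d i y)
    (hdP : ∀ i, ∀ p ∈ P, d i p ∈ P) (hB : ∀ i, ∃ b ∈ P, d i w = b * w) (lam : List ι) :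
    ∃ p ∈ P, lam.foldr d w = p * w := by
  induction lam with
  | nil => exact ⟨1, P.one_mem, (one_mul w).symm⟩
  | cons i lam ih =>
    obtain ⟨p, hp, hpw⟩ := ih
    obtain ⟨b, hb, hbw⟩ := hB i
    refine ⟨d i p + p * b, P.add_mem (hdP i p hp) (P.mul_mem hp hb), ?_⟩
    rw [List.foldr_cons, hpw, hLeib, hbw, add_mul, mul_assoc]

theorem exists_mem_iterate_shift_sub_eq_mul (Λ : S →+* S) (hΛP : ∀ p ∈ P, Λ p ∈ P)
    {a : S} (ha : a ∈ P) (hΔ : Λ w - w = a * w) (m : ℕ) {p : S} (hp : p ∈ P) :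
    ∃ q ∈ P, (fun x => Λ x - x)^[m] (p * w) = q * w := by
  have hΛw : Λ w = (1 + a) * w := by rw [add_mul, one_mul, ← hΔ, add_sub_cancel]
  induction m with
  | zero => exact ⟨p, hp, rfl⟩
  | succ m ih =>
    obtain ⟨q, hq, hqw⟩ := ih
    refine ⟨Λ q * (1 + a) - q, P.sub_mem (P.mul_mem (hΛP q hq) (P.add_mem P.one_mem ha)) hq, ?_⟩
    rw [Function.iterate_succ_apply', hqw, map_mul, hΛw, sub_mul, mul_assoc]

end LeftMultiples

theorem discrete_bilinear_identity_general (S W : Type*) [Ring S] [AddCommGroup W]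
    {ι : Type*} (P : Subring S) (Λ : S →+* S) (hΛP : ∀ p ∈ P, Λ p ∈ P)
    (der : ι → S →+ S)
    (hLeib : ∀ i (x y : S), der i (x * y) = der i x * y + x * der i y)
    (hderP : ∀ i, ∀ p ∈ P, der i p ∈ P)
    (z : S)
    (res : S →+ W) (hres : ∀ l : ℕ, ∀ q ∈ P, res (z ^ l * q) = 0)
    (wD winv zAU : S) (hw : wD * winv = 1)
    (hzAU : zAU ∈ P) (hΔ : Λ wD - wD = zAU * wD)
    (hB : ∀ i, ∃ b ∈ P, der i wD = b * wD) :
    ∀ (l m : ℕ), m ≤ 1 → ∀ lam : List ι,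
      res (z ^ l *
          (fun x => Λ x - x)^[m] (lam.foldr (fun i x => der i x) wD) * winv) = 0 := by
  intro l m _ lam
  obtain ⟨p, hp, hpw⟩ :=
    exists_mem_foldr_eq_mul_of_leibniz P (fun i x => der i x) hLeib hderP hB lam
  obtain ⟨q, hq, hqw⟩ := exists_mem_iterate_shift_sub_eq_mul P Λ hΛP hzAU hΔ m hp
  rw [hpw, hqw, mul_assoc, mul_assoc, hw, mul_one]
  exact hres l q hq

/-- Bilinear identity (part I) for the discrete AKNS-D hierarchy.  Work in an
abstract ring `S` of formal (matrix) Laurent-type series in `z`, with: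
`P` the subring of series containing only non-negative powers of `z`; the shift
`Λ` (a ring endomorphism preserving `P`), so `Δ x = Λ x - x`; a family `der i` of
time derivatives `∂_{kα}` (additive, Leibniz, preserving `P`); a central element
`z ∈ P`; and an additive residue map `res` vanishing on `z^l·P` for all `l ≥ 0`
(`res` extracts the coefficient of `z^{-1}`).  Suppose the Baker function `w_D`
is invertible with inverse `winv`, satisfies `L_D(w_D) = 0` in the form
`Δ w_D = (zA - U)·w_D` with `zA - U ∈ P`, and satisfies the evolution equations
`∂_{kα} w_D = B_{kα}·w_D` with each `B_{kα} ∈ P`.  Then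
`res(z^l · (Δ^m ∂^{[λ]} w_D) · w_D⁻¹) = 0` for all `l ≥ 0`, `m ∈ {0,1}`, and all
multi-indices `[λ]` of time derivatives. -/
theorem discrete_bilinear_identity (S W : Type*) [Ring S] [AddCommGroup W]
    {ι : Type*} (P : Subring S) (Λ : S →+* S) (hΛP : ∀ p ∈ P, Λ p ∈ P)
    (der : ι → S →+ S)
    (hLeib : ∀ i (x y : S), der i (x * y) = der i x * y + x * der i y)
    (hderP : ∀ i, ∀ p ∈ P, der i p ∈ P)
    (z : S) (hz : z ∈ P) (hzc : ∀ x : S, z * x = x * z)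
    (res : S →+ W) (hres : ∀ l : ℕ, ∀ q ∈ P, res (z ^ l * q) = 0)
    (wD winv zAU : S) (hw : wD * winv = 1) (hw' : winv * wD = 1)
    (hzAU : zAU ∈ P) (hΔ : Λ wD - wD = zAU * wD)
    (hB : ∀ i, ∃ b ∈ P, der i wD = b * wD) :
    ∀ (l m : ℕ), m ≤ 1 → ∀ lam : List ι,
      res (z ^ l *
          (fun x => Λ x - x)^[m] (lam.foldr (fun i x => der i x) wD) * winv) = 0 :=
  discrete_bilinear_identity_general S W P Λ hΛP der hLeib hderP z res hres wD winv zAU hw hzAU hΔ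
    hB
end

section
/- Suppose w_D = (I + ∑_{k≥1} w_k z^{-k}) g(n;t,z) and w_D* = (I + ∑_{k≥1} w*_k z^{-k}) g(-n;-t,z) satisfy res_z{ z^l w_D · (w_D*)^T } = 0 for all l ≥ 0. Then w_D^{-1} = (w_D*)^T. -/
noncomputable section

/-- Entrywise transpose of a matrix-valued power series. -/
def transposePS (m : ℕ) (K : Type*) [CommRing K]
    (F : PowerSeries (Matrix (Fin m) (Fin m) K)) :
    PowerSeries (Matrix (Fin m) (Fin m) K) :=
  PowerSeries.mk fun k => (PowerSeries.coeff k F).transpose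

/-!
Since `g₁ g₂ = 1`, the exponential factors cancel in `w_D (w_D*)ᵀ`, leaving the image under `φ`
of the series `W Wsᵀ` in `z⁻¹`. The residue hypotheses say that every coefficient of `z⁻ᵏ`,
`k ≥ 1`, of this series vanishes, and its constant coefficient is `I`, so `W Wsᵀ = 1`. As `W` is a
unit of the power series ring, this right inverse is also a left inverse, and conjugating back
by `g₁` gives the second identity.
-/

open PowerSeries
open scoped Matrix

theorem PowerSeries.eq_one_of_coeff_succ_eq_zero {R : Type*} [Semiring R] {F : R⟦X⟧}
    (h₀ : constantCoeff F = 1) (h : ∀ n, coeff (n + 1) F = 0) : F = 1 := by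
  ext (_ | n)
  · simpa using h₀
  · simp [h n, coeff_one]

theorem constantCoeff_transposePS (m : ℕ) (K : Type*) [CommRing K]
    (F : PowerSeries (Matrix (Fin m) (Fin m) K)) :
    constantCoeff (transposePS m K F) = (constantCoeff F)ᵀ := by
  rw [← coeff_zero_eq_constantCoeff_apply, ← coeff_zero_eq_constantCoeff_apply, transposePS,
    coeff_mk]

/-- `φ F` stands for the series `F` evaluated at `z⁻¹`, and `res` extracts the coefficient of
`z⁻¹`; the factors `g₁`, `g₂` are `g(n;t,z)` and `g(-n;-t,z)ᵀ`. -/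
theorem bilinear_implies_inverse_general (m : ℕ) (K : Type*) [CommRing K]
    (B : Type*) [Ring B]
    (φ : PowerSeries (Matrix (Fin m) (Fin m) K) →+* B)
    (z g₁ g₂ : B) (hg : g₁ * g₂ = 1) (hg' : g₂ * g₁ = 1)
    (res : B →+ Matrix (Fin m) (Fin m) K)
    (hres : ∀ (l : ℕ) (F : PowerSeries (Matrix (Fin m) (Fin m) K)),
      res (z ^ l * φ F) = PowerSeries.coeff (l + 1) F)
    (W Ws : PowerSeries (Matrix (Fin m) (Fin m) K))
    (hW : PowerSeries.constantCoeff W = 1)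
    (hWs : PowerSeries.constantCoeff Ws = 1)
    (hbil : ∀ l : ℕ,
      res (z ^ l * (φ W * g₁ * (g₂ * φ (transposePS m K Ws)))) = 0) :
    (φ W * g₁) * (g₂ * φ (transposePS m K Ws)) = 1 ∧
      (g₂ * φ (transposePS m K Ws)) * (φ W * g₁) = 1 := by
  set T := transposePS m K Ws
  have hprod : φ W * g₁ * (g₂ * φ T) = φ (W * T) := by
    rw [map_mul, mul_assoc, ← mul_assoc g₁, hg, one_mul]
  have hWT : W * T = 1 := by
    refine eq_one_of_coeff_succ_eq_zero ?_ fun l => ?_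
    · rw [map_mul, hW, constantCoeff_transposePS, hWs, Matrix.transpose_one, one_mul]
    · rw [← hres, ← hprod]
      exact hbil l
  have hTW : T * W = 1 :=
    (isUnit_iff_constantCoeff.2 (hW ▸ isUnit_one)).isRegular.left.mul_eq_one_symm hWT
  refine ⟨by rw [hprod, hWT, map_one], ?_⟩
  calc g₂ * φ T * (φ W * g₁) = g₂ * φ (T * W) * g₁ := by simp only [map_mul, mul_assoc]
    _ = 1 := by rw [hTW, map_one, mul_one, hg']

/-- Bilinear identity (part II, first conclusion).  The Baker functions are
`w_D = ŵ·g(n;t,z)` and `w_D* = ŵ*·g(-n;-t,z)`, where `ŵ = I + ∑_{k≥1} w_k z^{-k}`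
and `ŵ* = I + ∑_{k≥1} w*_k z^{-k}` are matrix-valued power series in `z⁻¹` with
constant coefficient `I`.  They live in an ambient operator ring `B`, into which
series in `z⁻¹` embed via a ring embedding `φ` (`φ F` is `F` evaluated at `z⁻¹`),
with the residue map `res` satisfying `res(z^l · φ F) = coeff_{l+1} F` (the
coefficient of `z^{-1}`).  The exponential factors satisfy
`g(n;t,z)·g(-n;-t,z)ᵀ = 1` (`g` is diagonal).  If
`res_z{z^l · w_D·(w_D*)ᵀ} = 0` for all `l ≥ 0`, then `w_D⁻¹ = (w_D*)ᵀ`, i.e.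
`w_D·(w_D*)ᵀ = 1 = (w_D*)ᵀ·w_D`. -/
theorem bilinear_implies_inverse (m : ℕ) (K : Type*) [CommRing K]
    (B : Type*) [Ring B]
    (φ : PowerSeries (Matrix (Fin m) (Fin m) K) →+* B) (hφ : Function.Injective φ)
    (z g₁ g₂ : B) (hg : g₁ * g₂ = 1) (hg' : g₂ * g₁ = 1)
    (res : B →+ Matrix (Fin m) (Fin m) K)
    (hres : ∀ (l : ℕ) (F : PowerSeries (Matrix (Fin m) (Fin m) K)),
      res (z ^ l * φ F) = PowerSeries.coeff (l + 1) F)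
    (W Ws : PowerSeries (Matrix (Fin m) (Fin m) K))
    (hW : PowerSeries.constantCoeff W = 1)
    (hWs : PowerSeries.constantCoeff Ws = 1)
    (hbil : ∀ l : ℕ,
      res (z ^ l * (φ W * g₁ * (g₂ * φ (transposePS m K Ws)))) = 0) :
    (φ W * g₁) * (g₂ * φ (transposePS m K Ws)) = 1 ∧
      (g₂ * φ (transposePS m K Ws)) * (φ W * g₁) = 1 :=
  bilinear_implies_inverse_general m K B φ z g₁ g₂ hg hg' res hres W Ws hW hWs hbil
end
end
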